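/- Let Ω ⊆ ℝⁿ be open and let μ be a non-negative Radon measure on Ω which satisfies the small-volume IC in Ω with some constant C ∈ [0,∞). Then μ(N) = 0 for every Borel set N ⊆ Ω with H^{n−1}(N) = 0. -/

import Mathlib

open MeasureTheory Filter Topology Set Metric
open scoped ENNReal symmDiff

noncomputable section

abbrev Eucl (n : ℕ) := EuclideanSpace ℝ (Fin n)

variable {n : ℕ}

/-- The divergence of a vector field on Euclidean space. -/
def diverg (φ : Eucl n → Eucl n) (x : Eucl n) : ℝ :=
  LinearMap.trace ℝ (Eucl n) (fderiv ℝ φ x).toLinearMap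

/-- Admissible test vector fields for the variational definition of the perimeter in `U`:
smooth, compactly supported in `U`, sub-unit. -/
def TestField (U : Set (Eucl n)) (φ : Eucl n → Eucl n) : Prop :=
  ContDiff ℝ (⊤ : ℕ∞) φ ∧ HasCompactSupport φ ∧ tsupport φ ⊆ U ∧ ∀ x, ‖φ x‖ ≤ 1

/-- Perimeter of `A` in an open set `U` (De Giorgi's variational definition, equal to the
total variation `|D1_A|(U)` of the distributional gradient of the indicator of `A`). -/
def perimOpen (A U : Set (Eucl n)) : ℝ≥0∞ :=
  ⨆ (φ : Eucl n → Eucl n) (_ : TestField U φ), ENNReal.ofReal (∫ x in A, diverg φ x)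

/-- Perimeter `P(A, D)` of `A` in an arbitrary set `D`: by outer regularity of the variation
measure this equals `|D1_A|(D)` whenever the indicator of `A` is of locally bounded variation
on an open neighborhood of `D`, and it is `∞` otherwise. -/
def perim (A D : Set (Eucl n)) : ℝ≥0∞ :=
  ⨅ (U : Set (Eucl n)) (_ : IsOpen U) (_ : D ⊆ U), perimOpen A U

/-- The density ratio of `A` at `x` at scale `ρ`. -/
def densRatio (A : Set (Eucl n)) (x : Eucl n) (ρ : ℝ) : ℝ≥0∞ :=
  volume (A ∩ ball x ρ) / volume (ball x ρ)

/-- The measure-theoretic interior `A^1` of `A`: the set of points of density `1`. -/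
def mtInterior (A : Set (Eucl n)) : Set (Eucl n) :=
  {x | Tendsto (densRatio A x) (𝓝[>] (0 : ℝ)) (𝓝 1)}

/-- The measure-theoretic closure `A^+` of `A`: the set of points of positive upper density. -/
def mtClosure (A : Set (Eucl n)) : Set (Eucl n) :=
  {x | 0 < Filter.limsup (densRatio A x) (𝓝[>] (0 : ℝ))}

/-- `BV*(ℝⁿ)`: measurable sets with finite measure and finite perimeter. -/
def BVStar (A : Set (Eucl n)) : Prop :=
  NullMeasurableSet A volume ∧ volume A < ⊤ ∧ perim A Set.univ < ⊤

/-- The small-volume isoperimetric condition in `ℝⁿ` with constant `C`, stated for a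
set function `F` (for a measure `μ` take `F = fun S => μ S`). -/
def SmallVolumeIC (F : Set (Eucl n) → ℝ≥0∞) (C : ℝ≥0∞) : Prop :=
  ∀ ε : ℝ, 0 < ε → ∃ δ : ℝ, 0 < δ ∧ ∀ A : Set (Eucl n), NullMeasurableSet A volume →
    volume A < ENNReal.ofReal δ → F (mtClosure A) ≤ C * perim A Set.univ + ENNReal.ofReal ε

/-- The almost-strong isoperimetric condition with constant `1` near `∞`. -/
def AlmostStrongICAtInfty (F : Set (Eucl n) → ℝ≥0∞) : Prop :=
  ∀ ε : ℝ, 0 < ε → ∃ R : ℝ, 0 < R ∧ ∀ A : Set (Eucl n), NullMeasurableSet A volume →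
    volume (A ∩ ball (0 : Eucl n) R) = 0 → volume A < ⊤ →
    F (mtClosure A) ≤ perim A Set.univ + ENNReal.ofReal ε

/-- The functional `P_{μ₊,μ₋}[A; D] = P(A,D) + μ₊(A^1) − μ₋(A^+)`, valued in the extended
reals. -/
def PerFun (μp μm : Measure (Eucl n)) (A D : Set (Eucl n)) : EReal :=
  ((perim A D + μp (mtInterior A) : ℝ≥0∞) : EReal) - ((μm (mtClosure A) : ℝ≥0∞) : EReal)

/-- Local convergence in measure on `Ω`. -/
def LocConvInMeasure (Ω : Set (Eucl n)) (A : ℕ → Set (Eucl n)) (B : Set (Eucl n)) : Prop :=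
  ∀ K : Set (Eucl n), K ⊆ Ω → IsCompact K →
    Tendsto (fun k => volume ((symmDiff (A k) B) ∩ K)) atTop (𝓝 0)

/-- Global convergence in measure on `Ω`. -/
def GlobConvInMeasure (Ω : Set (Eucl n)) (A : ℕ → Set (Eucl n)) (B : Set (Eucl n)) : Prop :=
  Tendsto (fun k => volume ((symmDiff (A k) B) ∩ Ω)) atTop (𝓝 0)


lemma trace_clm_eq_sum (T : Eucl n →L[ℝ] Eucl n) :
    LinearMap.trace ℝ (Eucl n) T.toLinearMap = ∑ i, T (EuclideanSpace.single i 1) i := by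
  classical
  rw [LinearMap.trace_eq_matrix_trace ℝ (EuclideanSpace.basisFun (Fin n) ℝ).toBasis]
  rw [Matrix.trace]
  refine Finset.sum_congr rfl fun i _ => ?_
  rw [Matrix.diag_apply, LinearMap.toMatrix_apply]
  simp [EuclideanSpace.basisFun_apply]

lemma diverg_continuous {φ : Eucl n → Eucl n} (hφ : ContDiff ℝ (⊤ : ℕ∞) φ) :
    Continuous (diverg φ) := by
  have h1 : Continuous (fderiv ℝ φ) := hφ.continuous_fderiv (by simp)
  have h2 : Continuous fun T : Eucl n →L[ℝ] Eucl n =>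
      LinearMap.trace ℝ (Eucl n) T.toLinearMap := by
    have : IsLinearMap ℝ fun T : Eucl n →L[ℝ] Eucl n =>
        LinearMap.trace ℝ (Eucl n) T.toLinearMap := by
      constructor <;> intros <;> simp
    exact LinearMap.continuous_of_finiteDimensional (this.mk' _)
  exact h2.comp h1

lemma diverg_hasCompactSupport {φ : Eucl n → Eucl n} (hφ : HasCompactSupport φ) :
    HasCompactSupport (diverg φ) := by
  have := hφ.fderiv (𝕜 := ℝ)
  exact this.comp_left (g := fun T : Eucl n →L[ℝ] Eucl n =>
    LinearMap.trace ℝ (Eucl n) T.toLinearMap) (by simp)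

/-- Half-open box in Euclidean space. -/
def eBox (a : Fin n → ℝ) (s : ℝ) : Set (Eucl n) := {x | ∀ j, a j ≤ x j ∧ x j < a j + s}

/-- Closed box in Euclidean space. -/
def eBoxC (a : Fin n → ℝ) (s : ℝ) : Set (Eucl n) := {x | ∀ j, a j ≤ x j ∧ x j ≤ a j + s}

lemma eBox_eq_preimage (a : Fin n → ℝ) (s : ℝ) :
    eBox a s = (MeasurableEquiv.toLp 2 (Fin n → ℝ)).symm ⁻¹'
      (Set.univ.pi fun j => Ico (a j) (a j + s)) := by
  ext x
  simp [eBox, MeasurableEquiv.coe_toLp_symm, Set.mem_pi]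

lemma measurableSet_eBox (a : Fin n → ℝ) (s : ℝ) : MeasurableSet (eBox a s) := by
  rw [eBox_eq_preimage]
  exact (MeasurableEquiv.toLp 2 (Fin n → ℝ)).symm.measurable
    (MeasurableSet.univ_pi fun j => measurableSet_Ico)

lemma volume_eBox (a : Fin n → ℝ) (s : ℝ) :
    volume (eBox a s) = ENNReal.ofReal s ^ n := by
  rw [eBox_eq_preimage,
    (EuclideanSpace.volume_preserving_symm_measurableEquiv_toLp (Fin n)).measure_preimage
      (MeasurableSet.univ_pi fun j => measurableSet_Ico).nullMeasurableSet]
  rw [Real.volume_pi_Ico]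
  simp

/-- Closed box in Euclidean space. -/

lemma eBoxC_eq_preimage (a : Fin n → ℝ) (s : ℝ) :
    eBoxC a s = (MeasurableEquiv.toLp 2 (Fin n → ℝ)).symm ⁻¹'
      (Icc a (fun j => a j + s)) := by
  ext x
  simp only [eBoxC, Set.mem_preimage, Set.mem_Icc, Pi.le_def, Set.mem_setOf_eq,
    MeasurableEquiv.coe_toLp_symm]
  exact ⟨fun h => ⟨fun i => (h i).1, fun i => (h i).2⟩, fun h j => ⟨h.1 j, h.2 j⟩⟩

lemma eBox_ae_eq_eBoxC (a : Fin n → ℝ) (s : ℝ) :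
    (eBox a s : Set (Eucl n)) =ᵐ[volume] eBoxC a s := by
  rw [eBox_eq_preimage, eBoxC_eq_preimage, ← Set.pi_univ_Icc]
  have h : (Set.univ.pi fun j => Ico (a j) (a j + s)) =ᵐ[(volume : Measure (Fin n → ℝ))]
      (Set.univ.pi fun j => Icc (a j) (a j + s)) := by
    rw [Set.pi_univ_Icc, volume_pi]; exact Measure.univ_pi_Ico_ae_eq_Icc
  have hmp := EuclideanSpace.volume_preserving_symm_measurableEquiv_toLp (Fin n)
  exact hmp.quasiMeasurePreserving.preimage_ae_eq h

lemma abs_coord_le_norm (x : Eucl n) (i : Fin n) : |x i| ≤ ‖x‖ := by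
  rw [EuclideanSpace.norm_eq]
  rw [← Real.sqrt_sq_eq_abs]
  apply Real.sqrt_le_sqrt
  exact Finset.single_le_sum (f := fun j => ‖x j‖ ^ 2) (fun j _ => by positivity)
    (Finset.mem_univ i) |>.trans_eq' (by simp [Real.norm_eq_abs, sq_abs])

lemma integral_diverg_box_le {m : ℕ} (φ : Eucl (m + 1) → Eucl (m + 1))
    (hφ : ContDiff ℝ (⊤ : ℕ∞) φ) (hb : ∀ x, ‖φ x‖ ≤ 1)
    (a : Fin (m + 1) → ℝ) {s : ℝ} (hs : 0 < s) :
    ∫ x in eBox a s, diverg φ x ≤ 2 * (m + 1) * s ^ m := by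
  set E := EuclideanSpace.equiv (Fin (m + 1)) ℝ with hE
  have hco : ⇑(MeasurableEquiv.toLp 2 (Fin (m + 1) → ℝ)).symm = ⇑E := rfl
  have hdiff : Differentiable ℝ φ := hφ.differentiable (by simp)
  set b : Fin (m + 1) → ℝ := fun j => a j + s with hbdef
  have hab : a ≤ b := fun j => by simp [hbdef]; positivity
  -- transfer to Pi space
  have step1 : ∫ x in eBox a s, diverg φ x = ∫ x in eBoxC a s, diverg φ x :=
    setIntegral_congr_set (eBox_ae_eq_eBoxC a s)
  have step2 : ∫ x in eBoxC a s, diverg φ x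
      = ∫ y in Icc a b, diverg φ (E.symm y) := by
    rw [eBoxC_eq_preimage, hco]
    have := (EuclideanSpace.volume_preserving_symm_measurableEquiv_toLp
      (Fin (m + 1))).setIntegral_preimage_emb
      (MeasurableEquiv.toLp 2 (Fin (m + 1) → ℝ)).symm.measurableEmbedding
      (fun y => diverg φ (E.symm y)) (Icc a b)
    rw [← this]
    rfl
  rw [step1, step2]
  -- divergence theorem in Pi space
  set f : (Fin (m + 1) → ℝ) → (Fin (m + 1) → ℝ) := fun y => E (φ (E.symm y)) with hf
  set f' : (Fin (m + 1) → ℝ) → (Fin (m + 1) → ℝ) →L[ℝ] (Fin (m + 1) → ℝ) := fun y =>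
    (E.toContinuousLinearMap.comp (fderiv ℝ φ (E.symm y))).comp
      E.symm.toContinuousLinearMap with hf'
  have hder : ∀ y, HasFDerivAt f (f' y) y := by
    intro y
    exact (E.toContinuousLinearMap.hasFDerivAt.comp _
      ((hdiff (E.symm y)).hasFDerivAt)).comp y E.symm.toContinuousLinearMap.hasFDerivAt
  have hdiv_eq : ∀ y, (∑ i, f' y (Pi.single i 1) i) = diverg φ (E.symm y) := by
    intro y
    rw [diverg, trace_clm_eq_sum]
    refine Finset.sum_congr rfl fun i _ => ?_
    have h1 : E.symm.toContinuousLinearMap (Pi.single i 1) = EuclideanSpace.single i 1 := by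
      rfl
    simp only [hf', ContinuousLinearMap.comp_apply, h1]
    rfl
  have hcont : Continuous fun y => diverg φ (E.symm y) :=
    (diverg_continuous hφ).comp E.symm.continuous
  have hcont_f : Continuous f := E.continuous.comp (hφ.continuous.comp E.symm.continuous)
  have hInt : IntegrableOn (fun x => ∑ i, f' x (Pi.single i 1) i) (Icc a b) volume := by
    have : (fun x => ∑ i, f' x (Pi.single i 1) i) = fun y => diverg φ (E.symm y) :=
      funext hdiv_eq
    rw [this]
    exact hcont.continuousOn.integrableOn_compact isCompact_Icc
  have key := integral_divergence_of_hasFDerivAt_off_countable a b hab f f' ∅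
    countable_empty hcont_f.continuousOn (fun x _ => hder x) hInt
  simp only [hdiv_eq] at key
  rw [key]
  -- bound the boundary terms
  have hface : ∀ i : Fin (m + 1), volume (Icc (a ∘ i.succAbove) (b ∘ i.succAbove))
      = ENNReal.ofReal s ^ m := by
    intro i
    rw [Real.volume_Icc_pi]
    simp [hbdef, Function.comp]
  have hbound : ∀ (i : Fin (m + 1)) (c : ℝ),
      |∫ x in Icc (a ∘ i.succAbove) (b ∘ i.succAbove), f (i.insertNth c x) i| ≤ s ^ m := by
    intro i c
    have hfin : volume (Icc (a ∘ i.succAbove) (b ∘ i.succAbove)) < ⊤ := by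
      rw [hface i]; exact ENNReal.pow_lt_top ENNReal.ofReal_lt_top
    have h1 : ∀ x ∈ Icc (a ∘ i.succAbove) (b ∘ i.succAbove),
        ‖f (i.insertNth c x) i‖ ≤ 1 := by
      intro x _
      have : f (i.insertNth c x) i = φ (E.symm (i.insertNth c x)) i := rfl
      rw [Real.norm_eq_abs, this]
      exact (abs_coord_le_norm _ i).trans (hb _)
    have hcm : Continuous fun x : Fin m → ℝ => f (i.insertNth c x) i :=
      (continuous_apply i).comp (hcont_f.comp (continuous_const.finInsertNth i continuous_id))
    have := norm_setIntegral_le_of_norm_le_const (μ := volume) hfin h1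
    rw [Real.norm_eq_abs] at this
    refine this.trans ?_
    rw [one_mul, measureReal_def, hface i]
    simp [ENNReal.toReal_pow, ENNReal.toReal_ofReal hs.le]
  calc (∑ i : Fin (m + 1),
        ((∫ x in Icc (a ∘ i.succAbove) (b ∘ i.succAbove), f (i.insertNth (b i) x) i) -
          ∫ x in Icc (a ∘ i.succAbove) (b ∘ i.succAbove), f (i.insertNth (a i) x) i))
      ≤ ∑ _i : Fin (m + 1), 2 * s ^ m := by
        refine Finset.sum_le_sum fun i _ => ?_
        have h1 := hbound i (b i)
        have h2 := hbound i (a i)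
        have h1' := abs_le.mp h1
        have h2' := abs_le.mp h2
        linarith [h1'.1, h1'.2, h2'.1, h2'.2]
      _ = 2 * (m + 1) * s ^ m := by
        rw [Finset.sum_const]
        simp; ring

lemma volume_eBoxC (a : Fin n → ℝ) (s : ℝ) :
    volume (eBoxC a s) = ENNReal.ofReal s ^ n := by
  rw [← measure_congr (eBox_ae_eq_eBoxC a s), volume_eBox]

lemma dist_le_of_coords {x y : Eucl n} {t : ℝ} (ht : 0 ≤ t)
    (h : ∀ j, |x j - y j| ≤ t) : dist x y ≤ n * t := by
  rw [EuclideanSpace.dist_eq]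
  have : ∑ j, dist (x j) (y j) ^ 2 ≤ ∑ _j : Fin n, t ^ 2 := by
    refine Finset.sum_le_sum fun j _ => ?_
    have := h j
    rw [Real.dist_eq]
    nlinarith [abs_nonneg (x j - y j), abs_le.mp (h j)]
  refine (Real.sqrt_le_sqrt this).trans ?_
  rw [Finset.sum_const, Finset.card_univ, Fintype.card_fin, nsmul_eq_mul]
  have h0 : Real.sqrt ((n:ℝ) * t ^ 2) = Real.sqrt n * t := by
    rw [Real.sqrt_mul (Nat.cast_nonneg n), Real.sqrt_sq ht]
  rw [h0]
  have h1 : Real.sqrt n ≤ n := by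
    have : ((n:ℝ)) ≤ (n:ℝ) ^ 2 := by
      have := Nat.le_self_pow (two_ne_zero) n
      exact_mod_cast this
    calc Real.sqrt n ≤ Real.sqrt ((n:ℝ)^2) := Real.sqrt_le_sqrt this
      _ = n := Real.sqrt_sq (Nat.cast_nonneg n)
  exact mul_le_mul_of_nonneg_right h1 ht

lemma subset_mtClosure_of_eBox (hn : 0 < n) {A : Set (Eucl n)} {a : Fin n → ℝ} {s : ℝ}
    (hs : 0 < s) (hsub : eBox a s ⊆ A) {x : Eucl n} (hx : x ∈ eBox a s) : x ∈ mtClosure A := by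
  have hnR : (0:ℝ) < n := by exact_mod_cast hn
  set κ : ℝ := (1 / (4 * n)) ^ n with hκ
  have hκpos : 0 < κ := by positivity
  have hmain : ∀ ρ : ℝ, ρ ∈ Ioc (0:ℝ) (n * s) → ENNReal.ofReal κ ≤ densRatio A x ρ := by
    rintro ρ ⟨hρ0, hρs⟩
    set t : ℝ := ρ / (2 * n) with htdef
    have ht0 : 0 < t := by positivity
    have h2t : 2 * t ≤ s := by
      have h' : ρ / (n:ℝ) ≤ s := (div_le_iff₀ hnR).mpr (by linarith)
      calc 2 * t = ρ / n := by rw [htdef]; field_simp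
        _ ≤ s := h'
    set c : Fin n → ℝ := fun j => if a j ≤ x j - t then x j - t else x j with hc
    have hPA : eBoxC c t ⊆ A ∩ ball x ρ := by
      intro y hy
      constructor
      · apply hsub
        intro j
        have hyj := hy j
        by_cases hj : a j ≤ x j - t <;> simp only [hc, hj, if_true, if_false] at hyj
        · exact ⟨hj.trans hyj.1, by
            have := (hx j).2; linarith [hyj.2]⟩
        · push_neg at hj
          exact ⟨(hx j).1.trans hyj.1, by linarith [hyj.2, (hx j).1]⟩
      · rw [mem_ball, dist_comm]
        have : dist x y ≤ n * t := by
          apply dist_le_of_coords ht0.le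
          intro j
          have hyj := hy j
          by_cases hj : a j ≤ x j - t <;> simp only [hc, hj, if_true, if_false] at hyj <;>
            rw [abs_le] <;> constructor <;> linarith [hyj.1, hyj.2]
        calc dist x y ≤ n * t := this
          _ = ρ / 2 := by rw [htdef]; field_simp
          _ < ρ := by linarith
    have hball : volume (ball x ρ : Set (Eucl n)) ≤ ENNReal.ofReal (2 * ρ) ^ n := by
      rw [← volume_eBoxC (fun j => x j - ρ) (2 * ρ)]
      apply measure_mono
      intro y hy
      intro j
      have h1 : |y j - x j| ≤ dist y x := by
        have := abs_coord_le_norm (y - x) j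
        simpa [dist_eq_norm] using this
      rw [mem_ball] at hy
      have h2 := abs_le.mp (h1.trans hy.le)
      show x j - ρ ≤ y j ∧ y j ≤ x j - ρ + 2 * ρ
      constructor <;> linarith [h2.1, h2.2]
    have hnum : ENNReal.ofReal (t ^ n) ≤ volume (A ∩ ball x ρ) := by
      rw [ENNReal.ofReal_pow ht0.le]
      calc (ENNReal.ofReal t) ^ n = volume (eBoxC c t) := (volume_eBoxC c t).symm
        _ ≤ volume (A ∩ ball x ρ) := measure_mono hPA
    calc ENNReal.ofReal κ = ENNReal.ofReal (t ^ n) / ENNReal.ofReal ((2 * ρ) ^ n) := by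
          rw [← ENNReal.ofReal_div_of_pos (by positivity)]
          congr 1
          rw [hκ, htdef, ← div_pow]
          congr 1
          field_simp
          ring
      _ ≤ volume (A ∩ ball x ρ) / volume (ball x ρ) := by
          apply ENNReal.div_le_div hnum
          rw [← ENNReal.ofReal_pow (by positivity)] at hball
          exact hball
      _ = densRatio A x ρ := rfl
  have hfreq : ∃ᶠ ρ in 𝓝[>] (0:ℝ), ENNReal.ofReal κ ≤ densRatio A x ρ := by
    apply Filter.Eventually.frequently
    filter_upwards [Ioc_mem_nhdsGT_of_mem
      (show (0:ℝ) ∈ Ico (0:ℝ) ((n:ℝ) * s) from ⟨le_refl 0, by positivity⟩)] with ρ hρ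
    exact hmain ρ hρ
  have := Filter.le_limsup_of_frequently_le' hfreq
  exact lt_of_lt_of_le (by simp [hκpos]) this

/-- dyadic scale -/
def sc (k : ℕ) : ℝ := ((2:ℝ) ^ k)⁻¹

lemma sc_pos (k : ℕ) : 0 < sc k := by rw [sc]; positivity

lemma sc_le_one (k : ℕ) : sc k ≤ 1 := by
  rw [sc, inv_le_one_iff₀]; right; exact one_le_pow₀ (by norm_num)

/-- dyadic cube at scale `k` with integer corner `c` -/
def dcube (k : ℕ) (c : Fin n → ℤ) : Set (Eucl n) :=
  eBox (fun j => c j * sc k) (sc k)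

lemma mem_dcube {k : ℕ} {c : Fin n → ℤ} {x : Eucl n} :
    x ∈ dcube k c ↔ ∀ j, ⌊x j * 2 ^ k⌋ = c j := by
  constructor
  · intro h j
    obtain ⟨h1, h2⟩ := h j
    rw [Int.floor_eq_iff]
    have hp : (0:ℝ) < 2 ^ k := by positivity
    constructor
    · calc (c j : ℝ) = c j * sc k * 2 ^ k := by rw [sc]; field_simp
        _ ≤ x j * 2 ^ k := by apply mul_le_mul_of_nonneg_right h1 hp.le
    · calc x j * 2 ^ k < (c j * sc k + sc k) * 2 ^ k := by
            apply mul_lt_mul_of_pos_right h2 hp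
        _ = c j + 1 := by rw [sc]; field_simp
  · intro h j
    have hf := h j
    have hp : (0:ℝ) < 2 ^ k := by positivity
    have h1 : (c j : ℝ) ≤ x j * 2 ^ k := hf ▸ Int.floor_le _
    have h2 : x j * 2 ^ k < c j + 1 := by
      have := Int.lt_floor_add_one (x j * 2 ^ k); rw [hf] at this; push_cast at this ⊢; linarith
    constructor
    · calc (c j : ℝ) * sc k ≤ x j * 2 ^ k * sc k := mul_le_mul_of_nonneg_right h1 (sc_pos k).le
        _ = x j := by rw [sc]; field_simp
    · calc x j = x j * 2 ^ k * sc k := by rw [sc]; field_simp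
        _ < ((c j : ℝ) + 1) * sc k := mul_lt_mul_of_pos_right h2 (sc_pos k)
        _ = c j * sc k + sc k := by ring

lemma floor_eq_floor_div_pow {u v : ℝ} (j : ℕ) (h : ⌊u⌋ = ⌊v⌋) :
    ⌊u / 2 ^ j⌋ = ⌊v / 2 ^ j⌋ := by
  have key : ∀ (w : ℝ) (q : ℤ), ⌊w / 2 ^ j⌋ = q ↔ q * 2 ^ j ≤ ⌊w⌋ ∧ ⌊w⌋ < (q + 1) * 2 ^ j := by
    intro w q
    have hp : (0:ℝ) < 2 ^ j := by positivity
    rw [Int.floor_eq_iff]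
    · constructor
      · rintro ⟨h1, h2⟩
        constructor
        · rw [Int.le_floor]; push_cast
          calc (q : ℝ) * 2 ^ j ≤ w / 2 ^ j * 2 ^ j := by
                apply mul_le_mul_of_nonneg_right h1 hp.le
            _ = w := by field_simp
        · rw [Int.floor_lt]; push_cast
          calc w = w / 2 ^ j * 2 ^ j := by field_simp
            _ < (q + 1) * 2 ^ j := by apply mul_lt_mul_of_pos_right h2 hp
      · rintro ⟨h1, h2⟩
        rw [Int.le_floor] at h1
        rw [Int.floor_lt] at h2
        push_cast at h1 h2
        constructor
        · rw [le_div_iff₀ hp]; exact h1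
        · rw [div_lt_iff₀ hp]; exact h2
  have hu := (key u ⌊u / 2 ^ j⌋).mp rfl
  rw [h] at hu
  exact ((key v ⌊u / 2 ^ j⌋).mpr hu).symm

lemma dcube_subset_of_le {k k' : ℕ} (hkk : k ≤ k') {c c' : Fin n → ℤ}
    (hne : (dcube k c ∩ dcube k' c' : Set (Eucl n)).Nonempty) : dcube k' c' ⊆ dcube k c := by
  obtain ⟨x, hx1, hx2⟩ := hne
  intro y hy
  rw [mem_dcube] at hx1 hx2 hy ⊢
  intro j
  have e1 : y j * 2 ^ k = (y j * 2 ^ k') / 2 ^ (k' - k) := by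
    have : (2:ℝ) ^ k' = 2 ^ k * 2 ^ (k' - k) := by
      rw [← pow_add]; congr 1; omega
    rw [this]; field_simp
  have e2 : x j * 2 ^ k = (x j * 2 ^ k') / 2 ^ (k' - k) := by
    have : (2:ℝ) ^ k' = 2 ^ k * 2 ^ (k' - k) := by
      rw [← pow_add]; congr 1; omega
    rw [this]; field_simp
  have h' : ⌊y j * 2 ^ k'⌋ = ⌊x j * 2 ^ k'⌋ := by rw [hy j, hx2 j]
  have h2 := floor_eq_floor_div_pow (k' - k) h'
  rw [e1, h2, ← e2, hx1 j]

lemma diverg_neg (φ : Eucl n → Eucl n) (x : Eucl n) : diverg (-φ) x = -diverg φ x := by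
  rw [diverg, diverg]
  have : fderiv ℝ (-φ) x = -fderiv ℝ φ x := fderiv_neg
  rw [this]
  simp

lemma perim_le_perimOpen_univ (A : Set (Eucl n)) : perim A Set.univ ≤ perimOpen A Set.univ := by
  rw [perim]
  exact (iInf_le _ Set.univ).trans ((iInf_le _ isOpen_univ).trans (iInf_le _ subset_rfl))

lemma perim_le_of_disjoint_boxes {m : ℕ} {ι : Type} [Countable ι] (f : ι → Set (Eucl (m + 1)))
    (w : ι → ℝ≥0∞)
    (hbox : ∀ q, f q = ∅ ∨ ∃ a s, 0 < s ∧ f q = eBox a s ∧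
        ENNReal.ofReal (2 * (m + 1) * s ^ m) ≤ w q)
    (hdisj : Pairwise (Function.onFun Disjoint f)) :
    perim (⋃ q, f q) Set.univ ≤ ∑' q, w q := by
  by_cases htop : ∑' q, w q = ⊤
  · rw [htop]; exact le_top
  have hwq : ∀ q, w q ≠ ⊤ := fun q h =>
    htop (ENNReal.tsum_eq_top_of_eq_top ⟨q, h⟩)
  refine (perim_le_perimOpen_univ _).trans ?_
  rw [perimOpen]
  refine iSup_le fun φ => iSup_le fun hφ => ?_
  obtain ⟨hsm, hcs, -, hnorm⟩ := hφ
  have hmeas : ∀ q, MeasurableSet (f q) := by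
    intro q
    rcases hbox q with h | ⟨a, s, _, h, _⟩ <;> rw [h]
    · exact MeasurableSet.empty
    · exact measurableSet_eBox a s
  have hInt : Integrable (diverg φ) :=
    (diverg_continuous hsm).integrable_of_hasCompactSupport (diverg_hasCompactSupport hcs)
  have hSum := hasSum_integral_iUnion hmeas hdisj hInt.integrableOn
  have hterm : ∀ q, |∫ x in f q, diverg φ x| ≤ (w q).toReal := by
    intro q
    rcases hbox q with h | ⟨a, s, hs, h, hle⟩
    · rw [h]; simp [ENNReal.toReal_nonneg]
    · rw [h, abs_le]
      have hbnd : (2 : ℝ) * (m + 1) * s ^ m ≤ (w q).toReal := by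
        rw [← ENNReal.ofReal_le_iff_le_toReal (hwq q)]
        exact hle
      constructor
      · have h1 : ∫ x in eBox a s, diverg (-φ) x ≤ 2 * (m + 1) * s ^ m :=
          integral_diverg_box_le (-φ) hsm.neg (fun x => by simpa using hnorm x) a hs
        have h2 : ∫ x in eBox a s, diverg (-φ) x = -∫ x in eBox a s, diverg φ x := by
          rw [← integral_neg]
          exact setIntegral_congr_fun (measurableSet_eBox a s) fun x _ => diverg_neg φ x
        rw [h2] at h1
        linarith
      · exact (integral_diverg_box_le φ hsm hnorm a hs).trans hbnd
  have hsummable2 : Summable fun q => (w q).toReal := ENNReal.summable_toReal htop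
  have hles : ∫ x in ⋃ q, f q, diverg φ x ≤ ∑' q, (w q).toReal := by
    rw [← hSum.tsum_eq]
    exact hSum.summable.tsum_le_tsum (fun q => (abs_le.mp (hterm q)).2) hsummable2
  calc ENNReal.ofReal (∫ x in ⋃ q, f q, diverg φ x) ≤ ENNReal.ofReal (∑' q, (w q).toReal) :=
        ENNReal.ofReal_le_ofReal hles
    _ = ∑' q, w q := by
        rw [← ENNReal.tsum_toReal_eq hwq, ENNReal.ofReal_toReal htop]

lemma exists_hausdorff_cover (S : Set (Eucl n)) (d : ℝ) (hd : 0 ≤ d)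
    (hH : μH[d] S = 0) {ε : ℝ≥0∞} (hε : 0 < ε) :
    ∃ t : ℕ → Set (Eucl n), S ⊆ ⋃ i, t i ∧ (∀ i, t i ⊆ S) ∧
      (∀ i, EMetric.diam (t i) ≤ ε) ∧
      ∑' i, (⨆ _ : (t i).Nonempty, EMetric.diam (t i) ^ d) < ε := by
  rw [MeasureTheory.Measure.hausdorffMeasure_apply] at hH
  have h1 : (⨅ (t : ℕ → Set (Eucl n)) (_ : S ⊆ ⋃ i, t i)
      (_ : ∀ i, EMetric.diam (t i) ≤ ε),
      ∑' i, ⨆ _ : (t i).Nonempty, EMetric.diam (t i) ^ d) = 0 := by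
    refine le_antisymm ?_ zero_le
    rw [← hH]
    exact le_iSup₂ (f := fun r (_ : 0 < r) =>
      ⨅ (t : ℕ → Set (Eucl n)) (_ : S ⊆ ⋃ i, t i) (_ : ∀ i, EMetric.diam (t i) ≤ r),
        ∑' i, ⨆ _ : (t i).Nonempty, EMetric.diam (t i) ^ d) ε hε
  have h2 : (⨅ (t : ℕ → Set (Eucl n)) (_ : S ⊆ ⋃ i, t i)
      (_ : ∀ i, EMetric.diam (t i) ≤ ε),
      ∑' i, ⨆ _ : (t i).Nonempty, EMetric.diam (t i) ^ d) < ε := h1 ▸ hε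
  rw [iInf_lt_iff] at h2
  obtain ⟨t, ht⟩ := h2
  rw [iInf_lt_iff] at ht
  obtain ⟨hcov, ht⟩ := ht
  rw [iInf_lt_iff] at ht
  obtain ⟨hdiam, ht⟩ := ht
  refine ⟨fun i => t i ∩ S, ?_, fun i => inter_subset_right,
    fun i => le_trans (EMetric.diam_mono inter_subset_left) (hdiam i),
    lt_of_le_of_lt ?_ ht⟩
  · intro x hx
    obtain ⟨i, hi⟩ := mem_iUnion.mp (hcov hx)
    exact mem_iUnion.mpr ⟨i, ⟨hi, hx⟩⟩
  · apply ENNReal.tsum_le_tsum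
    intro i
    refine iSup_le fun hne => ?_
    have h3 : (t i).Nonempty := hne.mono inter_subset_left
    refine le_trans ?_ (le_iSup _ h3)
    exact ENNReal.rpow_le_rpow (EMetric.diam_mono inter_subset_left) hd

lemma exists_scale {ρ : ℝ} (h0 : 0 < ρ) (h1 : ρ ≤ 1) : ∃ k, ρ ≤ sc k ∧ sc k < 2 * ρ := by
  have hex : ∃ j : ℕ, ((2:ℝ)⁻¹) ^ j < ρ := exists_pow_lt_of_lt_one h0 (by norm_num)
  have hscpow : ∀ j : ℕ, sc j = ((2:ℝ)⁻¹) ^ j := fun j => by rw [sc, inv_pow]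
  classical
  obtain ⟨j, hj⟩ := hex
  have hP : ∃ j : ℕ, sc j < ρ := ⟨j, by rw [hscpow]; exact hj⟩
  set j0 := Nat.find hP with hj0
  have hj0' : sc j0 < ρ := Nat.find_spec hP
  have hj0pos : j0 ≠ 0 := by
    intro h
    rw [h] at hj0'
    have : sc 0 = 1 := by rw [sc]; norm_num
    rw [this] at hj0'
    linarith
  refine ⟨j0 - 1, ?_, ?_⟩
  · have := Nat.find_min hP (m := j0 - 1) (by omega)
    push_neg at this
    exact this
  · have hstep : sc (j0 - 1) = 2 * sc j0 := by
      rw [sc, sc]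
      rw [show j0 = (j0 - 1) + 1 by omega]
      rw [pow_succ]
      field_simp
      rw [Nat.add_sub_cancel]
    rw [hstep]
    have := Nat.sub_add_cancel (Nat.one_le_iff_ne_zero.mpr hj0pos)
    linarith

lemma floor_dist_le {u v : ℝ} (h : |u - v| ≤ 1) : ⌊v⌋ - 1 ≤ ⌊u⌋ ∧ ⌊u⌋ ≤ ⌊v⌋ + 1 := by
  obtain ⟨h1, h2⟩ := abs_le.mp h
  constructor
  · have : (⌊v⌋ : ℝ) - 1 ≤ u := by linarith [Int.floor_le v]
    have := Int.le_floor.mpr (by push_cast; linarith : ((⌊v⌋ - 1 : ℤ) : ℝ) ≤ u)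
    omega
  · have : u < ⌊v⌋ + 2 := by linarith [Int.lt_floor_add_one v]
    have := Int.floor_lt.mpr (by push_cast; linarith : u < ((⌊v⌋ + 2 : ℤ) : ℝ))
    omega

set_option maxHeartbeats 2000000 in
lemma exists_good_cover {m : ℕ} (hm : 1 ≤ m) (K S : Set (Eucl (m + 1))) (hSK : S ⊆ K)
    (hH : μH[(m : ℝ)] S = 0) {r θ : ℝ} (hr : 0 < r) (hθ : 0 < θ) :
    ∃ A : Set (Eucl (m + 1)), MeasurableSet A ∧ S ⊆ mtClosure A ∧
      A ⊆ Metric.cthickening r K ∧ volume A ≤ ENNReal.ofReal θ ∧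
      perim A Set.univ ≤ ENNReal.ofReal θ := by
  classical
  -- choice of the small parameter ε
  set Creal : ℝ := 3 ^ (m + 1) * (2 * (m + 1)) * 2 ^ m * 2 with hCreal
  have hC0 : 0 < Creal := by positivity
  set ε : ℝ := min 1 (min (r / (2 * (m + 1))) (θ / Creal)) with hεdef
  have hε0 : 0 < ε := lt_min one_pos (lt_min (by positivity) (by positivity))
  have hε1 : ε ≤ 1 := min_le_left _ _
  have hεr : (m + 1 : ℝ) * (2 * ε) ≤ r := by
    have h1 : ε ≤ r / (2 * (m + 1)) := le_trans (min_le_right _ _) (min_le_left _ _)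
    rw [le_div_iff₀ (by positivity)] at h1
    nlinarith
  have hεθ : Creal * ε ≤ θ := by
    have h1 : ε ≤ θ / Creal := le_trans (min_le_right _ _) (min_le_right _ _)
    rw [le_div_iff₀ hC0] at h1
    linarith
  -- Hausdorff cover
  obtain ⟨t, hcov, htS, hdiam, hsum⟩ := exists_hausdorff_cover S (m : ℝ)
    (by positivity) hH (ε := ENNReal.ofReal ε) (by simp [hε0])
  have hdiam_ne : ∀ i, EMetric.diam (t i) ≠ ⊤ :=
    fun i => ((hdiam i).trans_lt ENNReal.ofReal_lt_top).ne
  set dR : ℕ → ℝ := fun i => (EMetric.diam (t i)).toReal with hdRdef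
  have hdR0 : ∀ i, 0 ≤ dR i := fun i => ENNReal.toReal_nonneg
  have hdRε : ∀ i, dR i ≤ ε := fun i =>
    ENNReal.toReal_le_of_le_ofReal hε0.le (hdiam i)
  set ρ : ℕ → ℝ := fun i => max (dR i) (ε * (2:ℝ)⁻¹ ^ (i + 1)) with hρdef
  have hρ0 : ∀ i, 0 < ρ i := fun i => lt_max_of_lt_right (by positivity)
  have hρε : ∀ i, ρ i ≤ ε := fun i => max_le (hdRε i)
    (by nlinarith [pow_le_one₀ (by norm_num : (0:ℝ) ≤ 2⁻¹) (by norm_num : (2:ℝ)⁻¹ ≤ 1) (n := i+1)])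
  choose k hk1 hk2 using fun i => exists_scale (hρ0 i) ((hρε i).trans hε1)
  -- distance within cover pieces
  have hdist : ∀ i, ∀ x ∈ t i, ∀ y ∈ t i, dist x y ≤ dR i := by
    intro i x hx y hy
    rw [dist_edist]
    exact ENNReal.toReal_mono (hdiam_ne i) (EMetric.edist_le_diam_of_mem hx hy)
  -- choose base points and cube collections
  set z : ℕ → Eucl (m + 1) := fun i => if h : (t i).Nonempty then h.choose else 0 with hzdef
  have hz : ∀ i, (t i).Nonempty → z i ∈ t i := by
    intro i h
    rw [hzdef]
    simp only [dif_pos h]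
    exact h.choose_spec
  set c0 : ℕ → (Fin (m + 1) → ℤ) := fun i j => ⌊z i j * 2 ^ (k i)⌋ with hc0def
  set C : ℕ → Finset (Fin (m + 1) → ℤ) := fun i => if (t i).Nonempty then
      (Finset.Icc (c0 i - 1) (c0 i + 1)).filter
        (fun c => (dcube (k i) c ∩ t i).Nonempty) else ∅ with hCdef
  have hCcard : ∀ i, (C i).card ≤ 3 ^ (m + 1) := by
    intro i
    simp only [hCdef]
    split
    · refine (Finset.card_filter_le _ _).trans ?_
      rw [Pi.card_Icc]
      have : ∀ j : Fin (m + 1), (Finset.Icc ((c0 i - 1) j) ((c0 i + 1) j)).card = 3 := by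
        intro j
        rw [Int.card_Icc]
        simp only [Pi.add_apply, Pi.sub_apply, Pi.one_apply]
        omega
      rw [Finset.prod_congr rfl fun j _ => this j]
      simp
    · simp
  have hCne : ∀ i, (C i).Nonempty → (t i).Nonempty := by
    intro i hne
    simp only [hCdef] at hne
    by_contra h
    rw [if_neg h] at hne
    exact Finset.not_nonempty_empty hne
  -- every point of t i lies in a cube from C i
  have hmemC : ∀ i, ∀ x ∈ t i, (fun j => ⌊x j * 2 ^ (k i)⌋) ∈ C i := by
    intro i x hx
    have hne : (t i).Nonempty := ⟨x, hx⟩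
    simp only [hCdef, if_pos hne]
    refine Finset.mem_filter.mpr ⟨?_, ⟨x, mem_dcube.mpr (fun j => rfl), hx⟩⟩
    rw [Finset.mem_Icc]
    have hbnd : ∀ j, |x j * 2 ^ (k i) - z i j * 2 ^ (k i)| ≤ 1 := by
      intro j
      have h1 : |x j - z i j| ≤ dist x (z i) := by
        have := abs_coord_le_norm (x - z i) j
        simpa [dist_eq_norm] using this
      have h2 : dist x (z i) ≤ dR i := hdist i x hx (z i) (hz i hne)
      have h3 : |x j - z i j| ≤ sc (k i) := h1.trans (h2.trans ((le_max_left _ _).trans (hk1 i)))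
      calc |x j * 2 ^ (k i) - z i j * 2 ^ (k i)| = |x j - z i j| * 2 ^ (k i) := by
            rw [← sub_mul, abs_mul, abs_of_pos (by positivity : (0:ℝ) < 2 ^ (k i))]
        _ ≤ sc (k i) * 2 ^ (k i) := by
            apply mul_le_mul_of_nonneg_right h3 (by positivity)
        _ = 1 := by rw [sc]; field_simp
    constructor
    · intro j
      have h5 := (floor_dist_le (hbnd j)).1
      simp only [hc0def, Pi.sub_apply, Pi.one_apply]
      omega
    · intro j
      have h5 := (floor_dist_le (hbnd j)).2
      simp only [hc0def, Pi.add_apply, Pi.one_apply]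
      omega
  -- the collection of dyadic cubes and the maximal subcollection
  set Q : Set (ℕ × (Fin (m + 1) → ℤ)) := {q | ∃ i, q.1 = k i ∧ q.2 ∈ C i} with hQdef
  set M : Set (ℕ × (Fin (m + 1) → ℤ)) :=
    {q | q ∈ Q ∧ ∀ q' ∈ Q, dcube q.1 q.2 ⊆ dcube q'.1 q'.2 → q.1 ≤ q'.1} with hMdef
  have hmax : ∀ q ∈ Q, ∃ p ∈ M, dcube q.1 q.2 ⊆ dcube p.1 p.2 := by
    intro q hq
    have hPex : ∃ j : ℕ, ∃ c', ((j, c') ∈ Q ∧ dcube q.1 q.2 ⊆ dcube j c') :=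
      ⟨q.1, q.2, hq, subset_rfl⟩
    obtain ⟨c', hc'Q, hc'sub⟩ := Nat.find_spec hPex
    refine ⟨(Nat.find hPex, c'), ⟨hc'Q, ?_⟩, hc'sub⟩
    intro q' hq' hsub
    exact Nat.find_le ⟨q'.2, ⟨by rwa [Prod.mk.eta], hc'sub.trans hsub⟩⟩
  set g : ℕ × (Fin (m + 1) → ℤ) → Set (Eucl (m + 1)) :=
    fun q => if q ∈ M then dcube q.1 q.2 else ∅ with hgdef
  set w : ℕ × (Fin (m + 1) → ℤ) → ℝ≥0∞ :=
    fun q => if q ∈ M then ENNReal.ofReal (2 * (m + 1) * (sc q.1) ^ m) else 0 with hwdef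
  -- disjointness
  have key : ∀ p p' : ℕ × (Fin (m + 1) → ℤ), p ∈ M → p' ∈ M → p.1 ≤ p'.1 →
      (dcube p.1 p.2 ∩ dcube p'.1 p'.2 : Set (Eucl (m + 1))).Nonempty → p = p' := by
    intro p p' hp hp' hle hne
    have hsub : dcube p'.1 p'.2 ⊆ dcube p.1 p.2 := dcube_subset_of_le hle hne
    have h2 : p'.1 ≤ p.1 := hp'.2 p hp.1 hsub
    have heq : p.1 = p'.1 := le_antisymm hle h2
    obtain ⟨x, hx1, hx2⟩ := hne
    have e1 := mem_dcube.mp hx1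
    have e2 := mem_dcube.mp hx2
    refine Prod.ext heq (funext fun j => ?_)
    rw [← e1 j, heq, e2 j]
  have hdisj : Pairwise (Function.onFun Disjoint g) := by
    intro p p' hne
    simp only [Function.onFun, hgdef]
    by_cases hp : p ∈ M
    · by_cases hp' : p' ∈ M
      · simp only [if_pos hp, if_pos hp']
        rw [Set.disjoint_iff_inter_eq_empty]
        by_contra hcon
        rw [← Ne, ← Set.nonempty_iff_ne_empty] at hcon
        rcases le_total p.1 p'.1 with h | h
        · exact hne (key p p' hp hp' h hcon)
        · exact hne (key p' p hp' hp h (by rwa [Set.inter_comm])).symm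
      · simp [if_neg hp']
    · simp [if_neg hp]
  -- coverage
  have hScov : S ⊆ mtClosure (⋃ q, g q) := by
    intro x hx
    obtain ⟨i, hxi⟩ := mem_iUnion.mp (hcov hx)
    have hq : ((k i, fun j => ⌊x j * 2 ^ (k i)⌋) : ℕ × (Fin (m + 1) → ℤ)) ∈ Q :=
      ⟨i, rfl, hmemC i x hxi⟩
    obtain ⟨p, hpM, hsub⟩ := hmax _ hq
    have hxp : x ∈ dcube p.1 p.2 := hsub (mem_dcube.mpr fun j => rfl)
    have hcube_sub : dcube p.1 p.2 ⊆ ⋃ q, g q := by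
      intro y hy
      exact mem_iUnion.mpr ⟨p, by rw [hgdef]; simp only [if_pos hpM]; exact hy⟩
    exact subset_mtClosure_of_eBox (Nat.succ_pos m) (sc_pos p.1) hcube_sub hxp
  -- inclusion in thickening
  have hcubeK : ∀ q ∈ Q, (dcube q.1 q.2 : Set (Eucl (m + 1))) ⊆ cthickening r K := by
    rintro ⟨kq, cq⟩ ⟨i, hk, hc⟩ y hy
    simp only at hk
    subst hk
    have hne : (t i).Nonempty := hCne i ⟨cq, hc⟩
    have hc' : (dcube (k i) cq ∩ t i : Set (Eucl (m + 1))).Nonempty := by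
      rw [hCdef] at hc
      simp only [if_pos hne] at hc
      exact (Finset.mem_filter.mp hc).2
    obtain ⟨x, hx1, hx2⟩ := hc'
    have hdyx : dist y x ≤ ((m + 1 : ℕ) : ℝ) * sc (k i) := by
      apply dist_le_of_coords (sc_pos _).le
      intro j
      obtain ⟨hy1, hy2⟩ := hy j
      obtain ⟨hx1', hx2'⟩ := hx1 j
      rw [abs_le]
      constructor <;> linarith
    push_cast at hdyx
    have hdr : dist y x ≤ r := by
      refine hdyx.trans (le_trans ?_ hεr)
      have h1 : sc (k i) ≤ 2 * ε := (hk2 i).le.trans (by nlinarith [hρε i])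
      have : (0:ℝ) ≤ (m:ℝ) + 1 := by positivity
      calc ((m:ℝ) + 1) * sc (k i) ≤ ((m:ℝ) + 1) * (2 * ε) := by nlinarith
        _ = (m + 1 : ℝ) * (2 * ε) := by norm_num
    exact mem_cthickening_of_dist_le y x r K (hSK (htS i hx2)) hdr
  have hAK : (⋃ q, g q) ⊆ cthickening r K := by
    refine iUnion_subset fun q => ?_
    simp only [hgdef]
    split
    · next h => exact hcubeK q h.1
    · exact empty_subset _
  -- the weight bound
  set u : ℕ → (ℕ × (Fin (m + 1) → ℤ)) → ℝ≥0∞ := fun i q =>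
    if q.1 = k i ∧ q.2 ∈ C i then ENNReal.ofReal (2 * (m + 1) * (sc (k i)) ^ m) else 0
    with hudef
  have hwu : ∀ q, w q ≤ ∑' i, u i q := by
    intro q
    simp only [hwdef]
    split
    · next hq =>
      obtain ⟨i, hki, hci⟩ := hq.1
      refine le_trans ?_ (ENNReal.le_tsum i)
      simp only [hudef, if_pos (⟨hki, hci⟩ : q.1 = k i ∧ q.2 ∈ C i), hki]
      exact le_rfl
    · exact zero_le
  have hstep3 : ∀ i, ∑' q, u i q ≤
      (3 : ℝ≥0∞) ^ (m + 1) * ENNReal.ofReal (2 * (m + 1) * (sc (k i)) ^ m) := by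
    intro i
    have h1 : ∑' q, u i q = ∑ q ∈ ({k i} ×ˢ C i), u i q := by
      refine tsum_eq_sum fun q hq => ?_
      simp only [hudef]
      rw [if_neg]
      rintro ⟨ha, hb⟩
      exact hq (Finset.mem_product.mpr ⟨Finset.mem_singleton.mpr ha, hb⟩)
    have h2 : ∀ q ∈ ({k i} ×ˢ C i), u i q = ENNReal.ofReal (2 * (m + 1) * (sc (k i)) ^ m) := by
      intro q hq
      obtain ⟨ha, hb⟩ := Finset.mem_product.mp hq
      simp only [hudef, if_pos (⟨Finset.mem_singleton.mp ha, hb⟩ : q.1 = k i ∧ q.2 ∈ C i)]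
    rw [h1, Finset.sum_congr rfl h2, Finset.sum_const, Finset.card_product,
      Finset.card_singleton, one_mul, nsmul_eq_mul]
    apply mul_le_mul_left
    have := hCcard i
    exact_mod_cast Nat.cast_le.mpr this
  have hscm : ∀ i, ENNReal.ofReal ((sc (k i)) ^ m) ≤
      ENNReal.ofReal (2 ^ m) *
        (ENNReal.ofReal (dR i ^ m) + ENNReal.ofReal ((ε * 2⁻¹ ^ (i + 1)) ^ m)) := by
    intro i
    rw [← ENNReal.ofReal_add (by positivity) (by positivity),
      ← ENNReal.ofReal_mul (by positivity)]
    apply ENNReal.ofReal_le_ofReal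
    have h1 : sc (k i) ^ m ≤ (2 * ρ i) ^ m := pow_le_pow_left₀ (sc_pos _).le (hk2 i).le m
    refine h1.trans ?_
    rw [mul_pow]
    have h2 : ρ i ^ m ≤ dR i ^ m + (ε * 2⁻¹ ^ (i + 1)) ^ m := by
      have h3 : ρ i = max (dR i) (ε * 2⁻¹ ^ (i + 1)) := rfl
      rcases max_cases (dR i) (ε * 2⁻¹ ^ (i + 1)) with ⟨he, _⟩ | ⟨he, _⟩ <;>
        rw [h3, he] <;> nlinarith [pow_nonneg (hdR0 i) m,
          pow_nonneg (by positivity : (0:ℝ) ≤ ε * 2⁻¹ ^ (i + 1)) m]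
    exact mul_le_mul_of_nonneg_left h2 (by positivity)
  have hsum1 : ∑' i, ENNReal.ofReal (dR i ^ m) ≤ ENNReal.ofReal ε := by
    refine le_trans (ENNReal.tsum_le_tsum fun i => ?_) hsum.le
    by_cases hne : (t i).Nonempty
    · have he : ENNReal.ofReal (dR i ^ m) = EMetric.diam (t i) ^ (m : ℝ) := by
        rw [ENNReal.ofReal_pow (hdR0 i), ENNReal.ofReal_toReal (hdiam_ne i),
          ENNReal.rpow_natCast]
      rw [he]
      exact le_iSup (fun _ : (t i).Nonempty => EMetric.diam (t i) ^ (m : ℝ)) hne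
    · have he : dR i = 0 := by
        simp [hdRdef, not_nonempty_iff_eq_empty.mp hne, EMetric.diam]
      rw [he, zero_pow (by omega), ENNReal.ofReal_zero]
      exact zero_le
  have hsum2 : ∑' i, ENNReal.ofReal ((ε * 2⁻¹ ^ (i + 1)) ^ m) ≤ ENNReal.ofReal ε := by
    have hterm : ∀ i : ℕ, ((ε * 2⁻¹ ^ (i + 1) : ℝ)) ^ m ≤ ε * 2⁻¹ ^ (i + 1) := by
      intro i
      rw [mul_pow]
      have h1 : ε ^ m ≤ ε := pow_le_of_le_one hε0.le hε1 (by omega)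
      have h2 : ((2:ℝ)⁻¹ ^ (i + 1)) ^ m ≤ (2:ℝ)⁻¹ ^ (i + 1) := by
        rw [← pow_mul]
        exact pow_le_pow_of_le_one (by norm_num) (by norm_num)
          (Nat.le_mul_of_pos_right _ (by omega))
      have h3 : (0:ℝ) ≤ ε ^ m := by positivity
      have h4 : (0:ℝ) ≤ (2:ℝ)⁻¹ ^ (i + 1) := by positivity
      nlinarith
    have hsumm : Summable fun i : ℕ => ε * (2:ℝ)⁻¹ ^ (i + 1) := by
      apply Summable.mul_left
      exact (summable_geometric_of_lt_one (by norm_num) (by norm_num)).comp_injective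
        (add_left_injective 1)
    calc ∑' i, ENNReal.ofReal ((ε * 2⁻¹ ^ (i + 1)) ^ m)
        ≤ ∑' i, ENNReal.ofReal (ε * 2⁻¹ ^ (i + 1)) :=
          ENNReal.tsum_le_tsum fun i => ENNReal.ofReal_le_ofReal (hterm i)
      _ = ENNReal.ofReal (∑' i, ε * 2⁻¹ ^ (i + 1)) :=
          (ENNReal.ofReal_tsum_of_nonneg (fun i => by positivity) hsumm).symm
      _ ≤ ENNReal.ofReal ε := by
          apply ENNReal.ofReal_le_ofReal
          rw [tsum_mul_left]
          have hgeo : ∑' i : ℕ, (2:ℝ)⁻¹ ^ (i + 1) = 1 := by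
            have h5 : ∑' i : ℕ, (2:ℝ)⁻¹ ^ (i + 1) = (2:ℝ)⁻¹ * ∑' i : ℕ, (2:ℝ)⁻¹ ^ i := by
              rw [← tsum_mul_left]
              congr 1
              ext i
              rw [pow_succ]
              ring
            rw [h5, tsum_geometric_of_lt_one (by norm_num) (by norm_num)]
            norm_num
          rw [hgeo, mul_one]
  have hW : ∑' q, w q ≤ ENNReal.ofReal θ := by
    calc ∑' q, w q ≤ ∑' q, ∑' i, u i q := ENNReal.tsum_le_tsum hwu
      _ = ∑' i, ∑' q, u i q := ENNReal.tsum_comm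
      _ ≤ ∑' i, (3 : ℝ≥0∞) ^ (m + 1) * ENNReal.ofReal (2 * (m + 1) * (sc (k i)) ^ m) :=
          ENNReal.tsum_le_tsum hstep3
      _ = ∑' i, (3 : ℝ≥0∞) ^ (m + 1) *
          (ENNReal.ofReal (2 * (m + 1)) * ENNReal.ofReal ((sc (k i)) ^ m)) := by
          refine tsum_congr fun i => ?_
          rw [← ENNReal.ofReal_mul (by positivity : (0:ℝ) ≤ 2 * (m + 1))]
      _ = (3 : ℝ≥0∞) ^ (m + 1) * ENNReal.ofReal (2 * (m + 1)) *
          ∑' i, ENNReal.ofReal ((sc (k i)) ^ m) := by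
          rw [ENNReal.tsum_mul_left, ENNReal.tsum_mul_left, mul_assoc]
      _ ≤ (3 : ℝ≥0∞) ^ (m + 1) * ENNReal.ofReal (2 * (m + 1)) *
          (ENNReal.ofReal (2 ^ m) * (ENNReal.ofReal ε + ENNReal.ofReal ε)) := by
          apply mul_le_mul_right
          calc ∑' i, ENNReal.ofReal ((sc (k i)) ^ m)
              ≤ ∑' i, ENNReal.ofReal (2 ^ m) *
                (ENNReal.ofReal (dR i ^ m) + ENNReal.ofReal ((ε * 2⁻¹ ^ (i + 1)) ^ m)) :=
                ENNReal.tsum_le_tsum hscm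
            _ = ENNReal.ofReal (2 ^ m) * (∑' i, ENNReal.ofReal (dR i ^ m) +
                ∑' i, ENNReal.ofReal ((ε * 2⁻¹ ^ (i + 1)) ^ m)) := by
                rw [ENNReal.tsum_mul_left, ENNReal.tsum_add]
            _ ≤ ENNReal.ofReal (2 ^ m) * (ENNReal.ofReal ε + ENNReal.ofReal ε) :=
                mul_le_mul_right (add_le_add hsum1 hsum2) _
      _ ≤ ENNReal.ofReal θ := by
          have h3 : (3 : ℝ≥0∞) ^ (m + 1) = ENNReal.ofReal (3 ^ (m + 1)) := by
            rw [ENNReal.ofReal_pow (by norm_num)]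
            norm_num
          rw [h3, ← ENNReal.ofReal_add hε0.le hε0.le, ← ENNReal.ofReal_mul (by positivity),
            ← ENNReal.ofReal_mul (by positivity), ← ENNReal.ofReal_mul (by positivity)]
          apply ENNReal.ofReal_le_ofReal
          calc (3:ℝ) ^ (m + 1) * (2 * (m + 1)) * (2 ^ m * (ε + ε)) = Creal * ε := by
                rw [hCreal]; ring
            _ ≤ θ := hεθ
  -- volume bound
  have hvol : volume (⋃ q, g q) ≤ ∑' q, w q := by
    refine (measure_iUnion_le g).trans (ENNReal.tsum_le_tsum fun q => ?_)
    simp only [hgdef, hwdef]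
    split
    · have hv : volume (dcube q.1 q.2 : Set (Eucl (m + 1))) =
          ENNReal.ofReal (sc q.1) ^ (m + 1) := volume_eBox _ _
      rw [hv, ← ENNReal.ofReal_pow (sc_pos _).le]
      apply ENNReal.ofReal_le_ofReal
      have h1 := sc_pos q.1
      have h2 := sc_le_one q.1
      have h3 : sc q.1 ^ (m + 1) = sc q.1 ^ m * sc q.1 := by rw [pow_succ]
      have h4 : (0:ℝ) ≤ sc q.1 ^ m := by positivity
      nlinarith [pow_nonneg h1.le m]
    · simp
  -- perimeter bound
  have hper : perim (⋃ q, g q) Set.univ ≤ ∑' q, w q := by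
    apply perim_le_of_disjoint_boxes g w ?_ hdisj
    intro q
    by_cases hq : q ∈ M
    · right
      exact ⟨_, sc q.1, sc_pos _, by simp only [hgdef, if_pos hq]; rfl,
        by simp only [hwdef, if_pos hq]; exact le_rfl⟩
    · left; simp only [hgdef, if_neg hq]
  have hmeasA : MeasurableSet (⋃ q, g q) := MeasurableSet.iUnion fun q => by
    simp only [hgdef]
    split
    exacts [measurableSet_eBox _ _, MeasurableSet.empty]
  exact ⟨⋃ q, g q, hmeasA, hScov, hAK, hvol.trans hW, hper.trans hW⟩

/-- Lem. `abs-con-H`: a measure satisfying the small-volume IC in `Ω` vanishes on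
`H^{n-1}`-negligible Borel sets. -/
theorem smallVolumeIC_null_on_hausdorff_null {n : ℕ}
    (Ω : Set (Eucl n)) (hΩ : IsOpen Ω)
    (μ : Measure (Eucl n)) (hμ0 : μ Ωᶜ = 0)
    (hloc : ∀ K : Set (Eucl n), K ⊆ Ω → IsCompact K → μ K < ⊤)
    (C : ℝ) (hC : 0 ≤ C)
    (hIC : ∀ ε : ℝ, 0 < ε → ∃ δ : ℝ, 0 < δ ∧ ∀ A : Set (Eucl n), NullMeasurableSet A volume →
      closure A ⊆ Ω → volume A < ENNReal.ofReal δ →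
      μ (mtClosure A) ≤ ENNReal.ofReal C * perim A Set.univ + ENNReal.ofReal ε) :
    ∀ N : Set (Eucl n), N ⊆ Ω → MeasurableSet N → μH[(n : ℝ) - 1] N = 0 → μ N = 0 := by
  intro N hNΩ hNmeas hH
  match n, Ω, hΩ, μ, hμ0, hloc, hIC, N, hNΩ, hNmeas, hH with
  | 0, Ω, hΩ, μ, hμ0, hloc, hIC, N, hNΩ, hNmeas, hH =>
    have hN0 : N = ∅ := by
      rw [← not_nonempty_iff_eq_empty]
      intro hne
      have h1 := MeasureTheory.Measure.one_le_hausdorffMeasure_zero_of_nonempty hne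
      have h2 := MeasureTheory.Measure.hausdorffMeasure_mono
        (show ((0 : ℕ) : ℝ) - 1 ≤ 0 by norm_num) N
      rw [hH] at h2
      have h3 : (1 : ℝ≥0∞) ≤ 0 := h1.trans h2
      simp at h3
    rw [hN0]; exact measure_empty
  | 1, Ω, hΩ, μ, hμ0, hloc, hIC, N, hNΩ, hNmeas, hH =>
    have hN0 : N = ∅ := by
      rw [← not_nonempty_iff_eq_empty]
      intro hne
      have h1 := MeasureTheory.Measure.one_le_hausdorffMeasure_zero_of_nonempty hne
      have h2 := MeasureTheory.Measure.hausdorffMeasure_mono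
        (show ((1 : ℕ) : ℝ) - 1 ≤ 0 by norm_num) N
      rw [hH] at h2
      have h3 : (1 : ℝ≥0∞) ≤ 0 := h1.trans h2
      simp at h3
    rw [hN0]; exact measure_empty
  | (m + 2), Ω, hΩ, μ, hμ0, hloc, hIC, N, hNΩ, hNmeas, hH =>
    have hm : 1 ≤ m + 1 := Nat.le_add_left 1 m
    have hHm : μH[((m + 1 : ℕ) : ℝ)] N = 0 := by
      have hcast : ((m + 2 : ℕ) : ℝ) - 1 = ((m + 1 : ℕ) : ℝ) := by push_cast; ring
      rw [← hcast]; exact hH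
    -- Step A : vanishing on compact subsets
    have hcompact : ∀ K : Set (Eucl (m + 2)), IsCompact K → K ⊆ Ω → μ (N ∩ K) = 0 := by
      intro K hKc hKΩ
      have hkey : ∀ e : ℝ, 0 < e → μ (N ∩ K) ≤ ENNReal.ofReal e := by
        intro e he
        obtain ⟨δ, hδ0, hIC'⟩ := hIC (e / 2) (by linarith)
        obtain ⟨r, hr0, hrsub⟩ := hKc.exists_cthickening_subset_open hΩ hKΩ
        set θ : ℝ := min (δ / 2) (e / (2 * (C + 1))) with hθdef
        have hθ0 : 0 < θ := lt_min (by linarith) (by positivity)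
        have hHK : μH[((m + 1 : ℕ) : ℝ)] (N ∩ K) = 0 :=
          le_antisymm ((measure_mono inter_subset_left).trans hHm.le) zero_le
        obtain ⟨A, hAmeas, hAcl, hAth, hAvol, hAper⟩ :=
          exists_good_cover hm K (N ∩ K) inter_subset_right hHK hr0 hθ0
        have h2 : closure A ⊆ Ω :=
          ((isClosed_cthickening.closure_subset_iff).mpr hAth).trans hrsub
        have h3 : volume A < ENNReal.ofReal δ :=
          lt_of_le_of_lt hAvol (by
            apply ENNReal.ofReal_lt_ofReal_iff_of_nonneg (le_min (by linarith) (by positivity)) |>.mpr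
            calc θ ≤ δ / 2 := min_le_left _ _
              _ < δ := by linarith)
        have h4 := hIC' A hAmeas.nullMeasurableSet h2 h3
        calc μ (N ∩ K) ≤ μ (mtClosure A) := measure_mono hAcl
          _ ≤ ENNReal.ofReal C * perim A Set.univ + ENNReal.ofReal (e / 2) := h4
          _ ≤ ENNReal.ofReal C * ENNReal.ofReal θ + ENNReal.ofReal (e / 2) :=
            add_le_add_left (mul_le_mul_right hAper _) _
          _ = ENNReal.ofReal (C * θ) + ENNReal.ofReal (e / 2) := by
            rw [ENNReal.ofReal_mul hC]
          _ ≤ ENNReal.ofReal (e / 2) + ENNReal.ofReal (e / 2) := by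
            apply add_le_add_left
            apply ENNReal.ofReal_le_ofReal
            have hθe : θ ≤ e / (2 * (C + 1)) := min_le_right _ _
            calc C * θ ≤ C * (e / (2 * (C + 1))) := by nlinarith
              _ ≤ (C + 1) * (e / (2 * (C + 1))) := by
                  apply mul_le_mul_of_nonneg_right (by linarith) (by positivity)
              _ = e / 2 := by field_simp
          _ = ENNReal.ofReal e := by
            rw [← ENNReal.ofReal_add (by linarith) (by linarith)]
            norm_num
      -- conclude zero
      by_contra hpos
      rcases eq_top_or_lt_top (μ (N ∩ K)) with htop | hlt
      · have h5 := hkey 1 one_pos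
        rw [htop] at h5
        exact ENNReal.ofReal_ne_top (top_le_iff.mp h5)
      · have h0 : 0 < (μ (N ∩ K)).toReal :=
          ENNReal.toReal_pos hpos hlt.ne
        have := hkey ((μ (N ∩ K)).toReal / 2) (by linarith)
        have hlt2 : ENNReal.ofReal ((μ (N ∩ K)).toReal / 2) < μ (N ∩ K) := by
          conv_rhs => rw [← ENNReal.ofReal_toReal hlt.ne]
          rw [ENNReal.ofReal_lt_ofReal_iff_of_nonneg (by linarith)]
          linarith
        exact (this.trans_lt hlt2).false
    -- Step B : exhaustion
    by_cases hU : Ω = Set.univ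
    · have hcov : N ⊆ ⋃ i : ℕ, N ∩ closedBall (0 : Eucl (m + 2)) i := by
        intro x hx
        obtain ⟨i, hi⟩ := exists_nat_ge ‖x‖
        exact mem_iUnion.mpr ⟨i, hx, by simpa [mem_closedBall, dist_zero_right] using hi⟩
      refine le_antisymm ?_ zero_le
      calc μ N ≤ μ (⋃ i : ℕ, N ∩ closedBall 0 i) := measure_mono hcov
        _ ≤ ∑' i : ℕ, μ (N ∩ closedBall 0 i) := measure_iUnion_le _
        _ = 0 := by
            rw [ENNReal.tsum_eq_zero]
            exact fun i => hcompact _ (isCompact_closedBall 0 i) (hU ▸ Set.subset_univ _)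
    · have hne : Ωᶜ.Nonempty := Set.nonempty_compl.mpr hU
      set Ks : ℕ → Set (Eucl (m + 2)) :=
        fun i => closedBall 0 i ∩ {x | 1 / (i + 1 : ℝ) ≤ infDist x Ωᶜ} with hKs
      have hKcomp : ∀ i, IsCompact (Ks i) := fun i =>
        (isCompact_closedBall 0 i).inter_right
          (isClosed_le continuous_const (continuous_infDist_pt Ωᶜ))
      have hKsub : ∀ i, Ks i ⊆ Ω := by
        intro i x hx
        by_contra hxo
        have hmem : x ∈ Ωᶜ := hxo
        have h0 : infDist x Ωᶜ = 0 := infDist_zero_of_mem hmem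
        have h1 := hx.2
        rw [Set.mem_setOf_eq, h0] at h1
        have h2 : (0:ℝ) < 1 / (i + 1) := by positivity
        linarith
      have hcov : N ⊆ ⋃ i : ℕ, N ∩ Ks i := by
        intro x hx
        have hxΩ : x ∈ Ω := hNΩ hx
        have hd : 0 < infDist x Ωᶜ := by
          rw [← (hΩ.isClosed_compl.notMem_iff_infDist_pos hne)]
          simpa using hxΩ
        obtain ⟨i₁, hi₁⟩ := exists_nat_ge ‖x‖
        obtain ⟨i₂, hi₂⟩ := exists_nat_one_div_lt hd
        refine mem_iUnion.mpr ⟨max i₁ i₂, hx, ⟨?_, ?_⟩⟩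
        · rw [mem_closedBall, dist_zero_right]
          calc ‖x‖ ≤ i₁ := hi₁
            _ ≤ max i₁ i₂ := by exact_mod_cast Nat.cast_le.mpr (le_max_left _ _)
        · rw [Set.mem_setOf_eq]
          have h5 : (1:ℝ) / (max i₁ i₂ + 1) ≤ 1 / (i₂ + 1) := by
            apply one_div_le_one_div_of_le (by positivity)
            have : (i₂ : ℝ) ≤ max i₁ i₂ := by exact_mod_cast Nat.cast_le.mpr (le_max_right _ _)
            linarith
          linarith
      refine le_antisymm ?_ zero_le
      calc μ N ≤ μ (⋃ i : ℕ, N ∩ Ks i) := measure_mono hcov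
        _ ≤ ∑' i : ℕ, μ (N ∩ Ks i) := measure_iUnion_le _
        _ = 0 := by
            rw [ENNReal.tsum_eq_zero]
            exact fun i => hcompact _ (hKcomp i) (hKsub i)

end
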